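/- arXiv:1708.02294 — 2 statements merged into one kernel-verified Lean document; each statement's English description precedes it below -/
import Mathlib

section
/- Let G, H be connected graphs of diameters d_G, d_H, and let g ∈ R^{d_G+1}, h ∈ R^{d_H+1} be vectors such that g_k · h_l depends only on k + l; define f_{k+l} := g_k h_l. Then the generalized distance matrix satisfies M(f; G □ H) = M(g; G) ⊗ M(h; H). -/
open Matrix Kronecker

/-- The generalized distance matrix `M(f;G)`, whose `(x,y)` entry is `f (dist x y)`. -/
noncomputable def genDistMatrix {V : Type*} (G : SimpleGraph V) (f : ℕ → ℝ) : Matrix V V ℝ :=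
  Matrix.of fun x y => f (G.dist x y)

/-- The diameter of a finite graph. -/
noncomputable def gdiam {V : Type*} [Fintype V] (G : SimpleGraph V) : ℕ :=
  Finset.univ.sup fun p : V × V => G.dist p.1 p.2

namespace SimpleGraph

variable {α β : Type*} {G : SimpleGraph α} {H : SimpleGraph β}

lemma dist_boxProd {x y : α × β} (hG : G.Reachable x.1 y.1) (hH : H.Reachable x.2 y.2) :
    (G □ H).dist x y = G.dist x.1 y.1 + H.dist x.2 y.2 := by
  rw [dist, edist_boxProd, ENat.toNat_add (edist_ne_top_iff_reachable.mpr hG)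
    (edist_ne_top_iff_reachable.mpr hH), dist, dist]

lemma dist_le_gdiam [Fintype α] (G : SimpleGraph α) (x y : α) : G.dist x y ≤ gdiam G :=
  Finset.le_sup (f := fun p : α × α => G.dist p.1 p.2) (Finset.mem_univ (x, y))

end SimpleGraph

theorem genDistMatrix_boxProd {α β : Type*} [Fintype α] [Fintype β]
    (G : SimpleGraph α) (H : SimpleGraph β) (hG : G.Connected) (hH : H.Connected)
    (g h f : ℕ → ℝ)
    (hf : ∀ k l : ℕ, k ≤ gdiam G → l ≤ gdiam H → f (k + l) = g k * h l) :
    genDistMatrix (G □ H) f = genDistMatrix G g ⊗ₖ genDistMatrix H h := by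
  ext ⟨x₁, x₂⟩ ⟨y₁, y₂⟩
  rw [genDistMatrix, of_apply, SimpleGraph.dist_boxProd (hG x₁ y₁) (hH x₂ y₂)]
  exact hf _ _ (G.dist_le_gdiam x₁ y₁) (H.dist_le_gdiam x₂ y₂)
end

section
/- For any connected graphs G and H and any real z, the generalized distance matrix with f_m = z^m satisfies M(z; G □ H) = M(z; G) ⊗ M(z; H), where M(z; G)_{x,y} = z^{dist_G(x,y)}. -/
open Matrix Kronecker

/-- The matrix `M(z;G)` whose `(x,y)` entry is `z ^ dist x y`. -/
noncomputable def zDistMatrix {V : Type*} (G : SimpleGraph V) (z : ℝ) : Matrix V V ℝ :=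
  Matrix.of fun x y => z ^ (G.dist x y)

namespace SimpleGraph

-- Without reachability `dist` takes the junk value `0`, and the formula fails.
lemma dist_boxProd_of_reachable {α β : Type*} {G : SimpleGraph α} {H : SimpleGraph β}
    {x y : α × β} (hG : G.Reachable x.1 y.1) (hH : H.Reachable x.2 y.2) :
    (G □ H).dist x y = G.dist x.1 y.1 + H.dist x.2 y.2 := by
  have hGH : (G □ H).Reachable x y := reachable_boxProd.2 ⟨hG, hH⟩
  have h : ((G □ H).dist x y : ℕ∞) = G.dist x.1 y.1 + H.dist x.2 y.2 := by
    rw [hGH.coe_dist_eq_edist, hG.coe_dist_eq_edist, hH.coe_dist_eq_edist, edist_boxProd]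
  exact_mod_cast h

end SimpleGraph

theorem zDistMatrix_boxProd_general {α β : Type*}
    (G : SimpleGraph α) (H : SimpleGraph β) (hG : G.Connected) (hH : H.Connected)
    (z : ℝ) :
    zDistMatrix (G □ H) z = zDistMatrix G z ⊗ₖ zDistMatrix H z := by
  ext ⟨a, b⟩ ⟨c, d⟩
  rw [kroneckerMap_apply]
  simp only [zDistMatrix, of_apply]
  rw [SimpleGraph.dist_boxProd_of_reachable (hG.preconnected a c) (hH.preconnected b d), pow_add]

theorem zDistMatrix_boxProd {α β : Type*} [Fintype α] [Fintype β]
    (G : SimpleGraph α) (H : SimpleGraph β) (hG : G.Connected) (hH : H.Connected)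
    (z : ℝ) :
    zDistMatrix (G □ H) z = zDistMatrix G z ⊗ₖ zDistMatrix H z :=
  zDistMatrix_boxProd_general G H hG hH z
end
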